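/- arXiv:2107.02092 — 2 statements merged into one kernel-verified Lean document; each statement's English description precedes it below -/
import Mathlib

section
/- For all parameters α > 0, ζ > 0, δ > 0 and γ ∈ ℝ, the third moment of the symmetric K-distribution equals μ_3 = ∫_{-∞}^{∞} x^{3} f(x) dx = 3 α(α+1)γζ(ζ+1)/δ² + γ³, where f is the SKD density. -/
open Real MeasureTheory

/-- Density of the symmetric K-distribution (SKD): the continuous mixture of a
reflected Gamma parental density over a Gamma prior. -/
noncomputable def skdDensity (α ζ δ γ : ℝ) (x : ℝ) : ℝ :=
  ∫ β in Set.Ioi (0 : ℝ),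
    (|x - γ| ^ (α - 1) / (2 * β ^ α * Real.Gamma α)) * Real.exp (-|x - γ| / β) *
      ((δ ^ ζ * β ^ (ζ - 1) / Real.Gamma ζ) * Real.exp (-δ * β))

/-!
Write the density as the mixture `∫ ρ_β (x - γ) π(β) dβ` of the reflected Gamma density `ρ_β`
with the Gamma prior `π`. By Fubini the third moment is `∫ π(β) (∫ x³ ρ_β (x - γ) dx) dβ`.
Since `ρ_β` is even, the binomial expansion of `(t + γ)³` keeps only the terms
`γ³ + 3γ ∫ t² ρ_β(t) dt = γ³ + 3γ α(α+1) β²`, and integrating against the prior uses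
`∫ β² π(β) dβ = ζ(ζ+1)/δ²`. Fubini applies because `|x|³ ≤ 4 (|x - γ|³ + |γ|³)` bounds the
absolute inner integral by a polynomial in `β`, which the prior integrates.
-/

open Set

lemma integrableOn_rpow_mul_exp_neg_mul_Ioi {p b : ℝ} (hp : 0 < p) (hb : 0 < b) :
    IntegrableOn (fun t : ℝ => t ^ (p - 1) * exp (-(b * t))) (Ioi 0) := by
  simpa only [rpow_one, neg_mul] using
    integrableOn_rpow_mul_exp_neg_mul_rpow (p := 1) (s := p - 1) (by linarith) one_pos hb

lemma integrable_comp_abs {E : Type*} [NormedAddCommGroup E] {f : ℝ → E}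
    (hf : IntegrableOn f (Ioi 0)) : Integrable fun x => f |x| := by
  have hIoi : IntegrableOn (fun x => f |x|) (Ioi 0) :=
    hf.congr_fun (fun x hx => by rw [abs_of_pos hx]) measurableSet_Ioi
  have hIic : IntegrableOn (fun x => f |x|) (Iic 0) := by
    have hneg : MeasurableEmbedding fun x : ℝ => -x := (Homeomorph.neg ℝ).measurableEmbedding
    rw [← Measure.map_neg_eq_self (volume : Measure ℝ), hneg.integrableOn_map_iff]
    simp_rw [Function.comp_def, abs_neg, neg_preimage, neg_Iic, neg_zero]
    exact (integrableOn_Ici_iff_integrableOn_Ioi).mpr hIoi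
  simpa only [Iic_union_Ioi, integrableOn_univ] using hIic.union hIoi

lemma Function.Odd.integral_eq_zero {f : ℝ → ℝ} (hf : Function.Odd f) : ∫ x, f x = 0 := by
  have h := integral_neg_eq_self f volume
  rw [show (fun x => f (-x)) = fun x => -f x from funext hf, integral_neg] at h
  linarith

lemma Gamma_add_two_div_Gamma {s : ℝ} (hs : 0 < s) : Gamma (s + 2) / Gamma s = s * (s + 1) := by
  rw [show s + 2 = s + 1 + 1 by ring, Gamma_add_one (by positivity), Gamma_add_one hs.ne']
  field_simp [(Gamma_pos_of_pos hs).ne']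

lemma integral_add_pow_mul {g : ℝ → ℝ} {n : ℕ} (hg : ∀ k ≤ n, Integrable fun t => t ^ k * g t)
    (γ : ℝ) :
    ∫ t, (t + γ) ^ n * g t
      = ∑ k ∈ Finset.range (n + 1), γ ^ (n - k) * n.choose k * ∫ t, t ^ k * g t := by
  have hexpand : ∀ t, (t + γ) ^ n * g t
      = ∑ k ∈ Finset.range (n + 1), γ ^ (n - k) * n.choose k * (t ^ k * g t) := fun t => by
    rw [add_pow, Finset.sum_mul]
    exact Finset.sum_congr rfl fun k _ => by ring
  simp_rw [hexpand]
  rw [integral_finsetSum _ fun k hk =>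
    (hg k (Nat.lt_succ_iff.mp (Finset.mem_range.mp hk))).const_mul _]
  simp_rw [integral_const_mul]

noncomputable def reflGammaPDF (α β t : ℝ) : ℝ :=
  |t| ^ (α - 1) / (2 * β ^ α * Gamma α) * exp (-|t| / β)

section ReflGamma

variable {α β : ℝ}

lemma reflGammaPDF_neg (t : ℝ) : reflGammaPDF α β (-t) = reflGammaPDF α β t := by
  simp only [reflGammaPDF, abs_neg]

lemma reflGammaPDF_nonneg (hα : 0 < α) (hβ : 0 < β) (t : ℝ) : 0 ≤ reflGammaPDF α β t := by
  have := Gamma_pos_of_pos hα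
  unfold reflGammaPDF
  positivity

lemma abs_pow_mul_reflGammaPDF (hα : 0 < α) (m : ℕ) (t : ℝ) :
    |t| ^ m * reflGammaPDF α β t
      = (2 * β ^ α * Gamma α)⁻¹ * (|t| ^ (α + m - 1) * exp (-(β⁻¹ * |t|))) := by
  have hpow : |t| ^ m * |t| ^ (α - 1) = |t| ^ (α + m - 1) := by
    rcases eq_or_ne t 0 with rfl | ht
    · rcases m.eq_zero_or_pos with rfl | hm
      · simp
      · rw [abs_zero, zero_pow hm.ne', zero_mul,
          zero_rpow (by have : (1 : ℝ) ≤ m := mod_cast hm; linarith)]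
    · rw [← rpow_natCast, ← rpow_add (abs_pos.2 ht)]
      ring_nf
  rw [reflGammaPDF, ← hpow, show -|t| / β = -(β⁻¹ * |t|) by ring]
  ring

lemma integrable_abs_pow_mul_reflGammaPDF (hα : 0 < α) (hβ : 0 < β) (m : ℕ) :
    Integrable fun t => |t| ^ m * reflGammaPDF α β t := by
  simp_rw [abs_pow_mul_reflGammaPDF hα m]
  exact (integrable_comp_abs (f := fun t => t ^ (α + m - 1) * exp (-(β⁻¹ * t)))
    (integrableOn_rpow_mul_exp_neg_mul_Ioi (by positivity) (by positivity))).const_mul _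

lemma integral_abs_pow_mul_reflGammaPDF (hα : 0 < α) (hβ : 0 < β) (m : ℕ) :
    ∫ t, |t| ^ m * reflGammaPDF α β t = β ^ m * (Gamma (α + m) / Gamma α) := by
  have := Gamma_pos_of_pos hα
  simp_rw [abs_pow_mul_reflGammaPDF hα m]
  rw [integral_const_mul, integral_comp_abs (f := fun t => t ^ (α + m - 1) * exp (-(β⁻¹ * t))),
    integral_rpow_mul_exp_neg_mul_Ioi (by positivity) (by positivity), one_div, inv_inv,
    rpow_add hβ, rpow_natCast]
  field_simp

lemma integrable_reflGammaPDF (hα : 0 < α) (hβ : 0 < β) : Integrable (reflGammaPDF α β) := by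
  simpa using integrable_abs_pow_mul_reflGammaPDF hα hβ 0

lemma integral_reflGammaPDF (hα : 0 < α) (hβ : 0 < β) : ∫ t, reflGammaPDF α β t = 1 := by
  simpa [(Gamma_pos_of_pos hα).ne'] using integral_abs_pow_mul_reflGammaPDF hα hβ 0

lemma integrable_pow_mul_reflGammaPDF (hα : 0 < α) (hβ : 0 < β) (m : ℕ) :
    Integrable fun t => t ^ m * reflGammaPDF α β t := by
  refine (integrable_abs_pow_mul_reflGammaPDF hα hβ m).mono'
    (Measurable.aestronglyMeasurable (by unfold reflGammaPDF; fun_prop))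
    (Filter.Eventually.of_forall fun t => ?_)
  rw [norm_mul, norm_pow, Real.norm_eq_abs, Real.norm_of_nonneg (reflGammaPDF_nonneg hα hβ t)]

lemma integral_pow_mul_reflGammaPDF_of_even (hα : 0 < α) (hβ : 0 < β) {m : ℕ} (hm : Even m) :
    ∫ t, t ^ m * reflGammaPDF α β t = β ^ m * (Gamma (α + m) / Gamma α) := by
  simp_rw [← integral_abs_pow_mul_reflGammaPDF hα hβ m, hm.pow_abs]

lemma integral_pow_mul_reflGammaPDF_of_odd {m : ℕ} (hm : Odd m) :
    ∫ t, t ^ m * reflGammaPDF α β t = 0 :=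
  Function.Odd.integral_eq_zero fun t => by rw [reflGammaPDF_neg, hm.neg_pow, neg_mul]

lemma integral_pow_three_mul_reflGammaPDF_sub (hα : 0 < α) (hβ : 0 < β) (γ : ℝ) :
    ∫ x, x ^ 3 * reflGammaPDF α β (x - γ) = 3 * γ * (α * (α + 1)) * β ^ 2 + γ ^ 3 := by
  rw [← integral_add_right_eq_self _ γ]
  simp only [add_sub_cancel_right]
  rw [integral_add_pow_mul (fun k _ => integrable_pow_mul_reflGammaPDF hα hβ k)]
  simp only [Finset.sum_range_succ, Finset.sum_range_zero]
  rw [integral_pow_mul_reflGammaPDF_of_even hα hβ (by decide : Even 0),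
    integral_pow_mul_reflGammaPDF_of_odd (by decide : Odd 1),
    integral_pow_mul_reflGammaPDF_of_even hα hβ (by decide : Even 2),
    integral_pow_mul_reflGammaPDF_of_odd (by decide : Odd 3)]
  norm_num [Gamma_add_two_div_Gamma hα, (Gamma_pos_of_pos hα).ne']
  ring

lemma norm_pow_three_mul_reflGammaPDF_sub_le (hα : 0 < α) (hβ : 0 < β) (γ x : ℝ) :
    ‖x ^ 3 * reflGammaPDF α β (x - γ)‖
      ≤ 4 * (|x - γ| ^ 3 * reflGammaPDF α β (x - γ)) + 4 * |γ| ^ 3 * reflGammaPDF α β (x - γ) := by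
  have hρ := reflGammaPDF_nonneg hα hβ (x - γ)
  have hcube : |x| ^ 3 ≤ 4 * (|x - γ| ^ 3 + |γ| ^ 3) :=
    calc |x| ^ 3 ≤ (|x - γ| + |γ|) ^ 3 := by
          gcongr
          simpa using abs_add_le (x - γ) γ
      _ ≤ 4 * (|x - γ| ^ 3 + |γ| ^ 3) :=
          (add_pow_le (abs_nonneg (x - γ)) (abs_nonneg γ) 3).trans_eq (by norm_num)
  rw [norm_mul, norm_pow, Real.norm_eq_abs, Real.norm_of_nonneg hρ]
  nlinarith

lemma integrable_pow_three_mul_reflGammaPDF_sub (hα : 0 < α) (hβ : 0 < β) (γ : ℝ) :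
    Integrable fun x => x ^ 3 * reflGammaPDF α β (x - γ) := by
  refine Integrable.mono' ?_ (Measurable.aestronglyMeasurable (by unfold reflGammaPDF; fun_prop))
    (Filter.Eventually.of_forall (norm_pow_three_mul_reflGammaPDF_sub_le hα hβ γ))
  exact (((integrable_abs_pow_mul_reflGammaPDF hα hβ 3).const_mul 4).add
    ((integrable_reflGammaPDF hα hβ).const_mul _)).comp_sub_right γ

lemma integral_norm_pow_three_mul_reflGammaPDF_sub_le (hα : 0 < α) (hβ : 0 < β) (γ : ℝ) :
    ∫ x, ‖x ^ 3 * reflGammaPDF α β (x - γ)‖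
      ≤ 4 * (Gamma (α + 3) / Gamma α) * β ^ 3 + 4 * |γ| ^ 3 := by
  have hbound := ((integrable_abs_pow_mul_reflGammaPDF hα hβ 3).const_mul 4).add
    ((integrable_reflGammaPDF hα hβ).const_mul (4 * |γ| ^ 3))
  calc ∫ x, ‖x ^ 3 * reflGammaPDF α β (x - γ)‖
      ≤ ∫ x, 4 * (|x - γ| ^ 3 * reflGammaPDF α β (x - γ))
          + 4 * |γ| ^ 3 * reflGammaPDF α β (x - γ) :=
        integral_mono_of_nonneg (Filter.Eventually.of_forall fun _ => norm_nonneg _)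
          (hbound.comp_sub_right γ)
          (Filter.Eventually.of_forall (norm_pow_three_mul_reflGammaPDF_sub_le hα hβ γ))
    _ = ∫ t, 4 * (|t| ^ 3 * reflGammaPDF α β t) + 4 * |γ| ^ 3 * reflGammaPDF α β t :=
        integral_sub_right_eq_self (fun t => 4 * (|t| ^ 3 * reflGammaPDF α β t)
          + 4 * |γ| ^ 3 * reflGammaPDF α β t) γ
    _ = 4 * (Gamma (α + 3) / Gamma α) * β ^ 3 + 4 * |γ| ^ 3 := by
        rw [integral_add ((integrable_abs_pow_mul_reflGammaPDF hα hβ 3).const_mul 4)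
            ((integrable_reflGammaPDF hα hβ).const_mul _), integral_const_mul, integral_const_mul,
          integral_abs_pow_mul_reflGammaPDF hα hβ 3, integral_reflGammaPDF hα hβ]
        push_cast
        ring

end ReflGamma

noncomputable def gammaPriorPDF (ζ δ β : ℝ) : ℝ :=
  δ ^ ζ * β ^ (ζ - 1) / Gamma ζ * exp (-δ * β)

section GammaPrior

variable {ζ δ : ℝ}

lemma gammaPriorPDF_nonneg (hζ : 0 < ζ) (hδ : 0 < δ) {β : ℝ} (hβ : 0 ≤ β) :
    0 ≤ gammaPriorPDF ζ δ β := by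
  have := Gamma_pos_of_pos hζ
  unfold gammaPriorPDF
  positivity

lemma pow_mul_gammaPriorPDF (n : ℕ) {β : ℝ} (hβ : 0 < β) :
    β ^ n * gammaPriorPDF ζ δ β = δ ^ ζ / Gamma ζ * (β ^ (ζ + n - 1) * exp (-(δ * β))) := by
  rw [gammaPriorPDF, show ζ + n - 1 = ζ - 1 + n by ring, rpow_add hβ, rpow_natCast, neg_mul]
  ring

lemma integrableOn_pow_mul_gammaPriorPDF (hζ : 0 < ζ) (hδ : 0 < δ) (n : ℕ) :
    IntegrableOn (fun β => β ^ n * gammaPriorPDF ζ δ β) (Ioi 0) :=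
  IntegrableOn.congr_fun ((integrableOn_rpow_mul_exp_neg_mul_Ioi (by positivity) hδ).const_mul _)
    (fun _ hβ => (pow_mul_gammaPriorPDF n hβ).symm) measurableSet_Ioi

lemma integral_pow_mul_gammaPriorPDF (hζ : 0 < ζ) (hδ : 0 < δ) (n : ℕ) :
    ∫ β in Ioi 0, β ^ n * gammaPriorPDF ζ δ β = Gamma (ζ + n) / Gamma ζ / δ ^ n := by
  have := Gamma_pos_of_pos hζ
  rw [setIntegral_congr_fun measurableSet_Ioi fun _ hβ => pow_mul_gammaPriorPDF n hβ,
    integral_const_mul, integral_rpow_mul_exp_neg_mul_Ioi (by positivity) hδ, one_div,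
    inv_rpow hδ.le, rpow_add hδ, rpow_natCast]
  field_simp

lemma integrableOn_gammaPriorPDF (hζ : 0 < ζ) (hδ : 0 < δ) :
    IntegrableOn (gammaPriorPDF ζ δ) (Ioi 0) := by
  simpa using integrableOn_pow_mul_gammaPriorPDF hζ hδ 0

lemma integral_gammaPriorPDF (hζ : 0 < ζ) (hδ : 0 < δ) :
    ∫ β in Ioi 0, gammaPriorPDF ζ δ β = 1 := by
  simpa [(Gamma_pos_of_pos hζ).ne'] using integral_pow_mul_gammaPriorPDF hζ hδ 0

end GammaPrior

lemma skdDensity_eq (α ζ δ γ x : ℝ) :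
    skdDensity α ζ δ γ x = ∫ β in Ioi 0, reflGammaPDF α β (x - γ) * gammaPriorPDF ζ δ β :=
  rfl

lemma integrable_pow_three_mul_skd_integrand {α ζ δ : ℝ} (hα : 0 < α) (hζ : 0 < ζ) (hδ : 0 < δ)
    (γ : ℝ) :
    Integrable
      (Function.uncurry fun x β => x ^ 3 * (reflGammaPDF α β (x - γ) * gammaPriorPDF ζ δ β))
      (volume.prod (volume.restrict (Ioi 0))) := by
  have hmeas : Measurable (Function.uncurry fun x β =>
      x ^ 3 * (reflGammaPDF α β (x - γ) * gammaPriorPDF ζ δ β)) := by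
    unfold reflGammaPDF gammaPriorPDF Function.uncurry
    fun_prop
  refine (integrable_prod_iff' hmeas.aestronglyMeasurable).2 ⟨?_, ?_⟩
  · filter_upwards [ae_restrict_mem measurableSet_Ioi] with β hβ
    simpa only [Function.uncurry_apply_pair, mul_assoc] using
      (integrable_pow_three_mul_reflGammaPDF_sub hα hβ γ).mul_const (gammaPriorPDF ζ δ β)
  · have hdom : Integrable (fun β => 4 * (Gamma (α + 3) / Gamma α) * (β ^ 3 * gammaPriorPDF ζ δ β)
        + 4 * |γ| ^ 3 * gammaPriorPDF ζ δ β) (volume.restrict (Ioi 0)) :=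
      ((integrableOn_pow_mul_gammaPriorPDF hζ hδ 3).const_mul _).add
        ((integrableOn_gammaPriorPDF hζ hδ).const_mul _)
    refine hdom.mono' (hmeas.norm.stronglyMeasurable.integral_prod_left').aestronglyMeasurable ?_
    filter_upwards [ae_restrict_mem measurableSet_Ioi] with β hβ
    have hπ := gammaPriorPDF_nonneg hζ hδ (le_of_lt hβ)
    simp only [Function.uncurry_apply_pair, ← mul_assoc, norm_mul (_ * _) (gammaPriorPDF ζ δ β),
      Real.norm_of_nonneg hπ, integral_mul_const]
    rw [Real.norm_of_nonneg (by positivity)]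
    nlinarith [integral_norm_pow_three_mul_reflGammaPDF_sub_le hα hβ γ]

/-- The third moment of the symmetric K-distribution. -/
theorem skd_third_moment (α ζ δ γ : ℝ) (hα : 0 < α) (hζ : 0 < ζ) (hδ : 0 < δ) :
    ∫ x : ℝ, x ^ 3 * skdDensity α ζ δ γ x
      = 3 * α * (α + 1) * γ * ζ * (ζ + 1) / δ ^ 2 + γ ^ 3 := by
  calc ∫ x, x ^ 3 * skdDensity α ζ δ γ x
      = ∫ x, ∫ β in Ioi 0, x ^ 3 * (reflGammaPDF α β (x - γ) * gammaPriorPDF ζ δ β) := by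
        simp only [skdDensity_eq, integral_const_mul]
    _ = ∫ β in Ioi 0, ∫ x, x ^ 3 * (reflGammaPDF α β (x - γ) * gammaPriorPDF ζ δ β) :=
        integral_integral_swap (integrable_pow_three_mul_skd_integrand hα hζ hδ γ)
    _ = ∫ β in Ioi 0, 3 * γ * (α * (α + 1)) * (β ^ 2 * gammaPriorPDF ζ δ β)
          + γ ^ 3 * gammaPriorPDF ζ δ β := by
        refine setIntegral_congr_fun measurableSet_Ioi fun β hβ => ?_
        simp only [← mul_assoc, integral_mul_const, integral_pow_three_mul_reflGammaPDF_sub hα hβ]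
        ring
    _ = 3 * α * (α + 1) * γ * ζ * (ζ + 1) / δ ^ 2 + γ ^ 3 := by
        rw [integral_add ((integrableOn_pow_mul_gammaPriorPDF hζ hδ 2).const_mul _)
            ((integrableOn_gammaPriorPDF hζ hδ).const_mul _), integral_const_mul,
          integral_const_mul, integral_pow_mul_gammaPriorPDF hζ hδ 2, integral_gammaPriorPDF hζ hδ]
        push_cast
        rw [Gamma_add_two_div_Gamma hζ]
        field_simp
end

section
/- For all parameters α > 0, ζ > 0, δ > 0 and γ ∈ ℝ, the variance (second central moment) of the symmetric K-distribution equals σ² = ∫_{-∞}^{∞} (x - γ)² f(x) dx = α(α+1)ζ(ζ+1)/δ², where f is the SKD density and γ is its mean. -/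
/-!
Conditionally on `β`, `X - γ` follows the reflected Gamma law, whose second moment is
`∫ |t|^(α+1) e^(-|t|/β) dt / (2 β^α Γ(α)) = Γ(α+2) β² / Γ(α) = α(α+1) β²`. Since everything is
nonnegative, Fubini lets us average this over the Gamma prior `β ~ Gamma(ζ, δ)`, and
`E[β²] = Γ(ζ+2) / (Γ(ζ) δ²) = ζ(ζ+1) / δ²`.
-/

open Real MeasureTheory

open Set ProbabilityTheory Function

theorem integral_integral_swap_of_nonneg {X Y : Type*} [MeasurableSpace X] [MeasurableSpace Y]
    {μ : Measure X} {ν : Measure Y} [SFinite μ] [SFinite ν] {f : X → Y → ℝ}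
    (hf : AEStronglyMeasurable (uncurry f) (μ.prod ν)) (hf_nonneg : ∀ᵐ y ∂ν, ∀ x, 0 ≤ f x y)
    (hf_int : ∀ᵐ y ∂ν, Integrable (f · y) μ) (hF : Integrable (fun y ↦ ∫ x, f x y ∂μ) ν) :
    ∫ x, ∫ y, f x y ∂ν ∂μ = ∫ y, ∫ x, f x y ∂μ ∂ν := by
  refine integral_integral_swap ((integrable_prod_iff' hf).2 ⟨hf_int, hF.congr ?_⟩)
  filter_upwards [hf_nonneg] with y hy
  simp only [uncurry_apply_pair, Real.norm_of_nonneg (hy _)]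

theorem Real.Gamma_add_two {s : ℝ} (hs : s ≠ 0) (hs' : s + 1 ≠ 0) :
    Gamma (s + 2) = s * (s + 1) * Gamma s := by
  rw [show s + 2 = s + 1 + 1 by ring, Gamma_add_one hs', Gamma_add_one hs]
  ring

theorem integrableOn_rpow_mul_exp_neg_mul_Ioi_s12 {a r : ℝ} (ha : 0 < a) (hr : 0 < r) :
    IntegrableOn (fun t : ℝ ↦ t ^ (a - 1) * exp (-(r * t))) (Ioi 0) :=
  .of_integral_ne_zero <| by rw [integral_rpow_mul_exp_neg_mul_Ioi ha hr]; positivity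

theorem integral_abs_sub_rpow_mul_exp_neg_div {s β : ℝ} (hs : 0 < s) (hβ : 0 < β) (γ : ℝ) :
    ∫ x, |x - γ| ^ (s - 1) * exp (-|x - γ| / β) = 2 * β ^ s * Gamma s := by
  have h_shift := integral_sub_right_eq_self (μ := volume) (fun t : ℝ ↦ |t| ^ (s - 1) * exp (-|t| / β)) γ
  have h_fold := integral_comp_abs (f := fun t ↦ t ^ (s - 1) * exp (-t / β))
  rw [h_shift, h_fold]
  simp_rw [neg_div, div_eq_inv_mul]
  rw [integral_rpow_mul_exp_neg_mul_Ioi hs (inv_pos.2 hβ), one_div, inv_inv, mul_assoc]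

theorem integrable_abs_sub_rpow_mul_exp_neg_div {s β : ℝ} (hs : 0 < s) (hβ : 0 < β) (γ : ℝ) :
    Integrable fun x ↦ |x - γ| ^ (s - 1) * exp (-|x - γ| / β) :=
  .of_integral_ne_zero <| by rw [integral_abs_sub_rpow_mul_exp_neg_div hs hβ]; positivity

theorem rpow_mul_gammaPDFReal {a r p t : ℝ} (ht : 0 < t) :
    t ^ p * gammaPDFReal a r t = r ^ a / Gamma a * (t ^ (a + p - 1) * exp (-(r * t))) := by
  rw [gammaPDFReal, if_pos ht.le, show a + p - 1 = p + (a - 1) by ring, rpow_add ht]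
  ring

theorem integrableOn_rpow_mul_gammaPDFReal {a r p : ℝ} (hap : 0 < a + p) (hr : 0 < r) :
    IntegrableOn (fun t ↦ t ^ p * gammaPDFReal a r t) (Ioi 0) :=
  IntegrableOn.congr_fun ((integrableOn_rpow_mul_exp_neg_mul_Ioi_s12 hap hr).const_mul _)
    (fun _ ht ↦ (rpow_mul_gammaPDFReal ht).symm) measurableSet_Ioi

theorem integral_rpow_mul_gammaPDFReal {a r p : ℝ} (hap : 0 < a + p) (hr : 0 < r) :
    ∫ t in Ioi 0, t ^ p * gammaPDFReal a r t = Gamma (a + p) / (Gamma a * r ^ p) := by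
  rw [setIntegral_congr_fun measurableSet_Ioi fun _ ht ↦ rpow_mul_gammaPDFReal ht,
    integral_const_mul, integral_rpow_mul_exp_neg_mul_Ioi hap hr, one_div, inv_rpow hr.le,
    rpow_add hr]
  have : r ^ a ≠ 0 := (rpow_pos_of_pos hr a).ne'
  field_simp

theorem sq_mul_abs_rpow_sub_one {s : ℝ} (hs : s + 1 ≠ 0) (t : ℝ) :
    t ^ 2 * |t| ^ (s - 1) = |t| ^ (s + 2 - 1) := by
  rcases eq_or_ne t 0 with rfl | ht
  · simp [zero_rpow (show s + 2 - 1 ≠ 0 by contrapose! hs; linarith)]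
  · rw [← sq_abs, ← rpow_natCast, ← rpow_add (abs_pos.2 ht)]
    ring_nf

/-- `(x - γ)²` times the integrand of `skdDensity`, with the normalising factor of the reflected
Gamma density moved onto the Gamma prior `gammaPDFReal ζ δ`. -/
noncomputable def skdSecondMomentIntegrand (α ζ δ γ x β : ℝ) : ℝ :=
  |x - γ| ^ (α + 2 - 1) * exp (-|x - γ| / β) * (gammaPDFReal ζ δ β / (2 * β ^ α * Gamma α))

theorem sq_mul_skdDensity {α : ℝ} (hα : α + 1 ≠ 0) (ζ δ γ x : ℝ) :
    (x - γ) ^ 2 * skdDensity α ζ δ γ x = ∫ β in Ioi 0, skdSecondMomentIntegrand α ζ δ γ x β := by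
  rw [skdDensity, ← integral_const_mul]
  refine setIntegral_congr_fun measurableSet_Ioi fun β hβ ↦ ?_
  rw [skdSecondMomentIntegrand, gammaPDFReal, if_pos (le_of_lt hβ), neg_mul,
    ← sq_mul_abs_rpow_sub_one hα]
  ring

theorem integral_skdSecondMomentIntegrand {α β : ℝ} (hα : 0 < α) (hβ : 0 < β) (ζ δ γ : ℝ) :
    ∫ x, skdSecondMomentIntegrand α ζ δ γ x β
      = α * (α + 1) * (β ^ (2 : ℝ) * gammaPDFReal ζ δ β) := by
  simp only [skdSecondMomentIntegrand]
  rw [integral_mul_const, integral_abs_sub_rpow_mul_exp_neg_div (by linarith) hβ,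
    Gamma_add_two hα.ne' (by linarith), rpow_add hβ]
  have := Gamma_pos_of_pos hα
  have := rpow_pos_of_pos hβ α
  field_simp

theorem integral_integral_swap_skdSecondMomentIntegrand {α ζ δ : ℝ} (hα : 0 < α) (hζ : 0 < ζ)
    (hδ : 0 < δ) (γ : ℝ) :
    ∫ x, ∫ β in Ioi 0, skdSecondMomentIntegrand α ζ δ γ x β
      = ∫ β in Ioi 0, ∫ x, skdSecondMomentIntegrand α ζ δ γ x β := by
  have h_meas := measurable_gammaPDFReal ζ δ
  refine integral_integral_swap_of_nonneg ?_ ?_ ?_ ?_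
  · unfold skdSecondMomentIntegrand
    fun_prop
  · filter_upwards [ae_restrict_mem measurableSet_Ioi] with β hβ x
    have := gammaPDFReal_nonneg hζ hδ β
    have := rpow_pos_of_pos hβ α
    unfold skdSecondMomentIntegrand
    positivity
  · filter_upwards [ae_restrict_mem measurableSet_Ioi] with β hβ
    exact (integrable_abs_sub_rpow_mul_exp_neg_div (by linarith) hβ γ).mul_const _
  · refine IntegrableOn.congr_fun
      ((integrableOn_rpow_mul_gammaPDFReal (p := 2) (by linarith) hδ).const_mul (α * (α + 1)))
      (fun β hβ ↦ (integral_skdSecondMomentIntegrand hα hβ ζ δ γ).symm) measurableSet_Ioi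

/-- The variance (second central moment) of the symmetric K-distribution. -/
theorem skd_variance (α ζ δ γ : ℝ) (hα : 0 < α) (hζ : 0 < ζ) (hδ : 0 < δ) :
    ∫ x : ℝ, (x - γ) ^ 2 * skdDensity α ζ δ γ x
      = α * (α + 1) * ζ * (ζ + 1) / δ ^ 2 := by
  calc ∫ x, (x - γ) ^ 2 * skdDensity α ζ δ γ x
      = ∫ x, ∫ β in Ioi 0, skdSecondMomentIntegrand α ζ δ γ x β := by
        simp_rw [sq_mul_skdDensity (show α + 1 ≠ 0 by linarith)]
    _ = ∫ β in Ioi 0, ∫ x, skdSecondMomentIntegrand α ζ δ γ x β :=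
        integral_integral_swap_skdSecondMomentIntegrand hα hζ hδ γ
    _ = ∫ β in Ioi 0, α * (α + 1) * (β ^ (2 : ℝ) * gammaPDFReal ζ δ β) :=
        setIntegral_congr_fun measurableSet_Ioi fun β hβ ↦
          integral_skdSecondMomentIntegrand hα hβ ζ δ γ
    _ = α * (α + 1) * (Gamma (ζ + 2) / (Gamma ζ * δ ^ (2 : ℝ))) := by
        rw [integral_const_mul, integral_rpow_mul_gammaPDFReal (by linarith) hδ]
    _ = α * (α + 1) * ζ * (ζ + 1) / δ ^ 2 := by
        rw [Gamma_add_two hζ.ne' (by linarith), rpow_two]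
        have := Gamma_pos_of_pos hζ
        field_simp
end
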